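/- Let M be an n-dimensional k-vector space with basis m₁, …, mₙ and let φ : {1, …, n} → {1, …, n} be a function with φ ∘ φ = φ. Define R^φ : M ⊗ M → M ⊗ M by R^φ(m_i ⊗ m_j) = δ_{ij} · [i ∈ Im(φ)] · ∑_{a, b ∈ φ⁻¹(i)} m_a ⊗ m_b (where [i ∈ Im(φ)] is 1 if i lies in the image of φ and 0 otherwise, and δ_{ij} is the Kronecker delta). Then R := R^φ satisfies R¹²R¹³ = R¹³R¹² = R¹²R²³ = R²³R¹², and R^φ is symmetric, i.e. τ ∘ R^φ ∘ τ = R^φ. In particular R^φ is a solution of the Long equation. -/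

import Mathlib

/-!
Writing `eᵢ = ∑_{φ a = i} m_a` and `cᵢ` for the coordinate functionals of the basis, `R^φ` is the
"diagonal" map `x ⊗ y ↦ ∑_{i ∈ Im φ} cᵢ(x) cᵢ(y) eᵢ ⊗ eᵢ`, which is visibly symmetric. Since `φ` is
idempotent, `cⱼ(eᵢ) = δᵢⱼ` for `i, j ∈ Im φ`, so `R(eᵢ ⊗ y) = cᵢ(y) eᵢ ⊗ eᵢ = R(y ⊗ eᵢ)`. Hence
each of `R¹²R¹³`, `R¹³R¹²`, `R¹²R²³`, `R²³R¹²` sends `x ⊗ y ⊗ z` to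
`∑_{i ∈ Im φ} cᵢ(x) cᵢ(y) cᵢ(z) eᵢ ⊗ eᵢ ⊗ eᵢ`.
-/

open TensorProduct

noncomputable section

variable {k M : Type*} [Field k] [AddCommGroup M] [Module k M]

/-- The flip map τ : M ⊗ M → M ⊗ M, τ(m ⊗ n) = n ⊗ m. -/
def tau (k M : Type*) [Field k] [AddCommGroup M] [Module k M] :
    M ⊗[k] M →ₗ[k] M ⊗[k] M := (TensorProduct.comm k M M).toLinearMap

/-- R¹² = R ⊗ id on M ⊗ (M ⊗ M) (transported along the associator). -/
def R12 (R : M ⊗[k] M →ₗ[k] M ⊗[k] M) :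
    M ⊗[k] (M ⊗[k] M) →ₗ[k] M ⊗[k] (M ⊗[k] M) :=
  (TensorProduct.assoc k M M M).toLinearMap ∘ₗ
    TensorProduct.map R LinearMap.id ∘ₗ (TensorProduct.assoc k M M M).symm.toLinearMap

/-- R²³ = id ⊗ R on M ⊗ (M ⊗ M). -/
def R23 (R : M ⊗[k] M →ₗ[k] M ⊗[k] M) :
    M ⊗[k] (M ⊗[k] M) →ₗ[k] M ⊗[k] (M ⊗[k] M) :=
  TensorProduct.map LinearMap.id R

/-- R¹³ = (id ⊗ τ)(R ⊗ id)(id ⊗ τ) on M ⊗ (M ⊗ M). -/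
def R13 (R : M ⊗[k] M →ₗ[k] M ⊗[k] M) :
    M ⊗[k] (M ⊗[k] M) →ₗ[k] M ⊗[k] (M ⊗[k] M) :=
  TensorProduct.map LinearMap.id (tau k M) ∘ₗ R12 R ∘ₗ
    TensorProduct.map LinearMap.id (tau k M)

/-- R is a solution of the Long equation: R¹²R¹³ = R¹³R¹² and R¹²R²³ = R²³R¹². -/
def IsLongSolution (R : M ⊗[k] M →ₗ[k] M ⊗[k] M) : Prop :=
  R12 R ∘ₗ R13 R = R13 R ∘ₗ R12 R ∧ R12 R ∘ₗ R23 R = R23 R ∘ₗ R12 R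

end

section LegActions

variable {k M : Type*} [Field k] [AddCommGroup M] [Module k M]

@[simp]
theorem tau_tmul (x y : M) : tau k M (x ⊗ₜ y) = y ⊗ₜ x := rfl

variable (R : M ⊗[k] M →ₗ[k] M ⊗[k] M) (x y z : M)

theorem R12_tmul : R12 R (x ⊗ₜ (y ⊗ₜ z)) = TensorProduct.assoc k M M M (R (x ⊗ₜ y) ⊗ₜ z) := rfl

theorem R13_tmul :
    R13 R (x ⊗ₜ (y ⊗ₜ z)) =
      (tau k M).lTensor M (TensorProduct.assoc k M M M (R (x ⊗ₜ z) ⊗ₜ y)) := rfl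

theorem R23_tmul : R23 R (x ⊗ₜ (y ⊗ₜ z)) = x ⊗ₜ R (y ⊗ₜ z) := rfl

end LegActions

noncomputable section DiagR

variable {k M ι : Type*} [Field k] [AddCommGroup M] [Module k M]

def diagR (c : ι → Module.Dual k M) (S : Finset ι) (e : ι → M) : M ⊗[k] M →ₗ[k] M ⊗[k] M :=
  ∑ i ∈ S, (LinearMap.mul' k k ∘ₗ TensorProduct.map (c i) (c i)).smulRight (e i ⊗ₜ e i)

variable (c : ι → Module.Dual k M) (S : Finset ι) (e : ι → M)

theorem diagR_tmul (x y : M) :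
    diagR c S e (x ⊗ₜ y) = ∑ i ∈ S, (c i x * c i y) • e i ⊗ₜ e i := by
  simp [diagR]

theorem tau_comp_diagR_comp_tau : tau k M ∘ₗ diagR c S e ∘ₗ tau k M = diagR c S e := by
  ext x y
  simp [diagR_tmul, mul_comm]

theorem R12_diagR_tmul (x y z : M) :
    R12 (diagR c S e) (x ⊗ₜ (y ⊗ₜ z)) = ∑ i ∈ S, (c i x * c i y) • e i ⊗ₜ (e i ⊗ₜ z) := by
  simp [R12_tmul, diagR_tmul, sum_tmul, smul_tmul']

theorem R13_diagR_tmul (x y z : M) :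
    R13 (diagR c S e) (x ⊗ₜ (y ⊗ₜ z)) = ∑ i ∈ S, (c i x * c i z) • e i ⊗ₜ (y ⊗ₜ e i) := by
  simp [R13_tmul, diagR_tmul, sum_tmul, smul_tmul']

theorem R23_diagR_tmul (x y z : M) :
    R23 (diagR c S e) (x ⊗ₜ (y ⊗ₜ z)) = ∑ i ∈ S, (c i y * c i z) • x ⊗ₜ (e i ⊗ₜ e i) := by
  simp [R23_tmul, diagR_tmul, tmul_sum]

theorem diagR_basis_tmul [DecidableEq ι] (b : Module.Basis ι k M) (i j : ι) :
    diagR b.coord S e (b i ⊗ₜ b j) = if i = j ∧ i ∈ S then e i ⊗ₜ e i else 0 := by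
  rcases eq_or_ne i j with rfl | hij
  · simp [diagR_tmul, Finsupp.single_apply]
  · simp +contextual [diagR_tmul, Finsupp.single_apply, hij]

section Biorthogonal

variable [DecidableEq ι] (he : ∀ i ∈ S, ∀ j ∈ S, c i (e j) = if i = j then 1 else 0)
include he

theorem diagR_tmul_left {i : ι} (hi : i ∈ S) (y : M) :
    diagR c S e (e i ⊗ₜ y) = c i y • e i ⊗ₜ e i := by
  rw [diagR_tmul]
  simp +contextual [he _ _ _ hi, hi]

theorem diagR_tmul_right {i : ι} (hi : i ∈ S) (x : M) :
    diagR c S e (x ⊗ₜ e i) = c i x • e i ⊗ₜ e i := by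
  rw [diagR_tmul]
  simp +contextual [he _ _ _ hi, hi]

variable (x y z : M)

theorem R12_comp_R13_diagR_tmul :
    (R12 (diagR c S e) ∘ₗ R13 (diagR c S e)) (x ⊗ₜ (y ⊗ₜ z)) =
      ∑ i ∈ S, (c i x * c i y * c i z) • e i ⊗ₜ (e i ⊗ₜ e i) := by
  rw [LinearMap.comp_apply, R13_diagR_tmul, map_sum]
  refine Finset.sum_congr rfl fun i hi => ?_
  rw [map_smul, R12_tmul, diagR_tmul_left c S e he hi]
  simp only [map_smul, assoc_tmul, ← smul_tmul', smul_smul, mul_right_comm]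

theorem R13_comp_R12_diagR_tmul :
    (R13 (diagR c S e) ∘ₗ R12 (diagR c S e)) (x ⊗ₜ (y ⊗ₜ z)) =
      ∑ i ∈ S, (c i x * c i y * c i z) • e i ⊗ₜ (e i ⊗ₜ e i) := by
  rw [LinearMap.comp_apply, R12_diagR_tmul, map_sum]
  refine Finset.sum_congr rfl fun i hi => ?_
  rw [map_smul, R13_tmul, diagR_tmul_left c S e he hi]
  simp only [map_smul, assoc_tmul, LinearMap.lTensor_tmul, tau_tmul, ← smul_tmul', smul_smul]

theorem R12_comp_R23_diagR_tmul :
    (R12 (diagR c S e) ∘ₗ R23 (diagR c S e)) (x ⊗ₜ (y ⊗ₜ z)) =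
      ∑ i ∈ S, (c i x * c i y * c i z) • e i ⊗ₜ (e i ⊗ₜ e i) := by
  rw [LinearMap.comp_apply, R23_diagR_tmul, map_sum]
  refine Finset.sum_congr rfl fun i hi => ?_
  rw [map_smul, R12_tmul, diagR_tmul_right c S e he hi]
  simp only [map_smul, assoc_tmul, ← smul_tmul', smul_smul]
  congr 1
  ring

theorem R23_comp_R12_diagR_tmul :
    (R23 (diagR c S e) ∘ₗ R12 (diagR c S e)) (x ⊗ₜ (y ⊗ₜ z)) =
      ∑ i ∈ S, (c i x * c i y * c i z) • e i ⊗ₜ (e i ⊗ₜ e i) := by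
  rw [LinearMap.comp_apply, R12_diagR_tmul, map_sum]
  refine Finset.sum_congr rfl fun i hi => ?_
  rw [map_smul, R23_tmul, diagR_tmul_left c S e he hi]
  simp only [tmul_smul, smul_smul]

theorem diagR_long_equations :
    R12 (diagR c S e) ∘ₗ R13 (diagR c S e) = R13 (diagR c S e) ∘ₗ R12 (diagR c S e) ∧
    R13 (diagR c S e) ∘ₗ R12 (diagR c S e) = R12 (diagR c S e) ∘ₗ R23 (diagR c S e) ∧
    R12 (diagR c S e) ∘ₗ R23 (diagR c S e) = R23 (diagR c S e) ∘ₗ R12 (diagR c S e) := by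
  refine ⟨ext_threefold' fun x y z => ?_, ext_threefold' fun x y z => ?_,
    ext_threefold' fun x y z => ?_⟩
  · rw [R12_comp_R13_diagR_tmul c S e he, R13_comp_R12_diagR_tmul c S e he]
  · rw [R13_comp_R12_diagR_tmul c S e he, R12_comp_R23_diagR_tmul c S e he]
  · rw [R12_comp_R23_diagR_tmul c S e he, R23_comp_R12_diagR_tmul c S e he]

end Biorthogonal

end DiagR

section Idempotent

variable {k M ι : Type*} [Semiring k] [AddCommMonoid M] [Module k M] [Fintype ι] [DecidableEq ι]

theorem Module.Basis.coord_sum_fiber (b : Module.Basis ι k M) (φ : ι → ι) (i j : ι) :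
    b.coord i (∑ a ∈ Finset.univ.filter (fun a => φ a = j), b a) = if φ i = j then 1 else 0 := by
  simp [Finsupp.single_apply]

theorem Module.Basis.coord_sum_fiber_of_mem_range (b : Module.Basis ι k M) {φ : ι → ι}
    (hφ : φ ∘ φ = φ) {i j : ι} (hi : i ∈ Finset.univ.image φ) :
    b.coord i (∑ a ∈ Finset.univ.filter (fun a => φ a = j), b a) = if i = j then 1 else 0 := by
  obtain ⟨a, -, rfl⟩ := Finset.mem_image.mp hi
  rw [b.coord_sum_fiber, ← Function.comp_apply (f := φ), hφ]

end Idempotent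

theorem long_equation_Rphi
    {k M : Type*} [Field k] [AddCommGroup M] [Module k M]
    {n : ℕ} (m : Module.Basis (Fin n) k M)
    (φ : Fin n → Fin n) (hφ : φ ∘ φ = φ)
    (R : M ⊗[k] M →ₗ[k] M ⊗[k] M)
    (hR : ∀ i j, R (m i ⊗ₜ[k] m j) =
      if i = j ∧ i ∈ Finset.univ.image φ then
        ∑ a ∈ Finset.univ.filter (fun a => φ a = i),
          ∑ b ∈ Finset.univ.filter (fun b => φ b = i), m a ⊗ₜ[k] m b
      else 0) :
    (R12 R ∘ₗ R13 R = R13 R ∘ₗ R12 R ∧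
     R13 R ∘ₗ R12 R = R12 R ∘ₗ R23 R ∧
     R12 R ∘ₗ R23 R = R23 R ∘ₗ R12 R) ∧
    tau k M ∘ₗ R ∘ₗ tau k M = R := by
  set S := Finset.univ.image φ
  set e : Fin n → M := fun i => ∑ a ∈ Finset.univ.filter (fun a => φ a = i), m a
  obtain rfl : R = diagR m.coord S e := by
    refine (m.tensorProduct m).ext fun ⟨i, j⟩ => ?_
    rw [Module.Basis.tensorProduct_apply, hR, diagR_basis_tmul, sum_tmul]
    simp only [tmul_sum, e]
  exact ⟨diagR_long_equations _ S e fun i hi _ _ => m.coord_sum_fiber_of_mem_range hφ hi,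
    tau_comp_diagR_comp_tau _ S e⟩
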